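/- arXiv:1906.11326 — 3 statements merged into one kernel-verified Lean document; each statement's English description precedes it below -/
import Mathlib

section
/- Let p ≥ 2 be an integer and α ∈ (0,1). For every x ∈ [0, μ(α)], one has x·∂ŝ/∂x(x,α) = w(x)·ŝ(x,α), where w(x) = (p−1)·(1 − (x/μ(α))^p)/((p−1) + (x/μ(α))^p), and 0 ≤ w(x) ≤ 1; consequently 0 ≤ x·∂ŝ/∂x(x,α) ≤ ŝ(x,α) for every x ∈ [0, μ(α)]. -/
/-- `mu p t = ((t - t^p)/((p-1)(1-t)))^(1/p)`, the real positive `p`th root. -/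
noncomputable def mu (p : ℕ) (t : ℝ) : ℝ :=
  ((t - t ^ p) / (((p : ℝ) - 1) * (1 - t))) ^ ((1 : ℝ) / p)

/-- `ŝ(x,α) = p x / ((p-1) μ(α) + μ(α)^(1-p) x^p)`. -/
noncomputable def shat (p : ℕ) (x α : ℝ) : ℝ :=
  (p : ℝ) * x / (((p : ℝ) - 1) * mu p α + x ^ p / mu p α ^ (p - 1))

lemma mu_pos (p : ℕ) (hp : 2 ≤ p) (α : ℝ) (hα : α ∈ Set.Ioo (0 : ℝ) 1) :
    0 < mu p α := by
  obtain ⟨h0, h1⟩ := hα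
  apply Real.rpow_pos_of_pos
  apply div_pos
  · have : α ^ p < α ^ 1 := pow_lt_pow_right_of_lt_one₀ h0 h1 (by omega)
    simpa using sub_pos.mpr this
  · apply mul_pos
    · have : (2 : ℝ) ≤ (p : ℝ) := by exact_mod_cast hp
      linarith
    · linarith

/-- **Lemma 1 (detail).** With `w(x) = (p-1)(1-(x/μ(α))^p)/((p-1)+(x/μ(α))^p)`, for every
`x ∈ [0, μ(α)]` one has `x ŝ'(x,α) = w(x) ŝ(x,α)` and `0 ≤ w(x) ≤ 1`, hence
`0 ≤ x ŝ'(x,α) ≤ ŝ(x,α)`. -/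
theorem shat_logarithmic_derivative (p : ℕ) (hp : 2 ≤ p)
    (α : ℝ) (hα : α ∈ Set.Ioo (0 : ℝ) 1)
    (w : ℝ → ℝ)
    (hw : ∀ x : ℝ, w x =
      ((p : ℝ) - 1) * (1 - (x / mu p α) ^ p) / (((p : ℝ) - 1) + (x / mu p α) ^ p)) :
    ∀ x ∈ Set.Icc (0 : ℝ) (mu p α),
      x * deriv (fun y => shat p y α) x = w x * shat p x α ∧
      0 ≤ w x ∧ w x ≤ 1 ∧
      0 ≤ x * deriv (fun y => shat p y α) x ∧
      x * deriv (fun y => shat p y α) x ≤ shat p x α := by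
  intro x hx
  obtain ⟨hx0, hxm⟩ := hx
  have hm : 0 < mu p α := mu_pos p hp α hα
  set m := mu p α with hmdef
  have hm0 : m ≠ 0 := ne_of_gt hm
  have hmp : (0 : ℝ) < m ^ (p - 1) := pow_pos hm _
  have hmp0 : m ^ (p - 1) ≠ 0 := ne_of_gt hmp
  have hp1 : (1 : ℝ) ≤ (p : ℝ) - 1 := by
    have : (2 : ℝ) ≤ (p : ℝ) := by exact_mod_cast hp
    linarith
  have hDpos : 0 < ((p : ℝ) - 1) * m + x ^ p / m ^ (p - 1) := by
    have h1 : 0 < ((p : ℝ) - 1) * m := by positivity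
    have h2 : 0 ≤ x ^ p / m ^ (p - 1) := by positivity
    linarith
  have hD0 : ((p : ℝ) - 1) * m + x ^ p / m ^ (p - 1) ≠ 0 := ne_of_gt hDpos
  have hr0 : 0 ≤ (x / m) ^ p := by positivity
  have hr1 : (x / m) ^ p ≤ 1 := by
    apply pow_le_one₀ (by positivity)
    rw [div_le_one hm]; exact hxm
  have hwden : 0 < ((p : ℝ) - 1) + (x / m) ^ p := by linarith
  have hwden0 : ((p : ℝ) - 1) + (x / m) ^ p ≠ 0 := ne_of_gt hwden
  -- derivative
  have hderiv : HasDerivAt (fun y => shat p y α)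
      (((p : ℝ) * (((p : ℝ) - 1) * m + x ^ p / m ^ (p - 1))
        - (p : ℝ) * x * ((p : ℝ) * x ^ (p - 1) / m ^ (p - 1)))
        / (((p : ℝ) - 1) * m + x ^ p / m ^ (p - 1)) ^ 2) x := by
    have hnum : HasDerivAt (fun y : ℝ => (p : ℝ) * y) (p : ℝ) x := by
      simpa using (hasDerivAt_id x).const_mul (p : ℝ)
    have hden : HasDerivAt (fun y : ℝ => ((p : ℝ) - 1) * m + y ^ p / m ^ (p - 1))
        ((p : ℝ) * x ^ (p - 1) / m ^ (p - 1)) x := by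
      simpa using (((hasDerivAt_pow p x).div_const (m ^ (p - 1))).const_add (((p : ℝ) - 1) * m))
    have := hnum.div hden hD0
    simp only [shat, ← hmdef]
    exact this
  have hd : deriv (fun y => shat p y α) x
      = (((p : ℝ) * (((p : ℝ) - 1) * m + x ^ p / m ^ (p - 1))
        - (p : ℝ) * x * ((p : ℝ) * x ^ (p - 1) / m ^ (p - 1)))
        / (((p : ℝ) - 1) * m + x ^ p / m ^ (p - 1)) ^ 2) := hderiv.deriv
  -- key identity
  have hkey : x * deriv (fun y => shat p y α) x = w x * shat p x α := by
    rw [hd, hw, shat, ← hmdef]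
    obtain ⟨q, rfl⟩ : ∃ q, p = q + 2 := ⟨p - 2, by omega⟩
    simp only [show q + 2 - 1 = q + 1 by omega] at *
    push_cast at *
    rw [div_pow]
    field_simp
    ring
  have hsnn : 0 ≤ shat p x α := by
    rw [shat, ← hmdef]
    positivity
  have hwnn : 0 ≤ w x := by
    rw [hw]
    apply div_nonneg _ (le_of_lt hwden)
    have h1 : 0 ≤ (1 : ℝ) - (x / m) ^ p := by linarith
    positivity
  have hwle : w x ≤ 1 := by
    rw [hw, div_le_one hwden]
    nlinarith
  refine ⟨hkey, hwnn, hwle, ?_, ?_⟩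
  · rw [hkey]; exact mul_nonneg hwnn hsnn
  · rw [hkey]
    calc w x * shat p x α ≤ 1 * shat p x α := mul_le_mul_of_nonneg_right hwle hsnn
    _ = shat p x α := one_mul _
end

section
/- For every α ∈ (0,1) and every integer k ≥ 0: f_k is nondecreasing on [0, α^p], f_k(0) > 0, and f_{k+1}(0) = ((p−1)/p)·μ(α_k)·f_k(0). -/
/-- The sequence `α_0 = α`, `α_{k+1} = p α_k / ((p-1) μ(α_k) + μ(α_k)^(1-p) α_k^p)`. -/
noncomputable def alphaSeq (p : ℕ) (α : ℝ) : ℕ → ℝ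
  | 0 => α
  | k + 1 =>
      (p : ℝ) * alphaSeq p α k /
        (((p : ℝ) - 1) * mu p (alphaSeq p α k) +
          alphaSeq p α k ^ p / mu p (alphaSeq p α k) ^ (p - 1))

/-- `f_0(x) = 1`, `f_{k+1}(x) = (1/p)((p-1) μ(α_k) f_k(x) + x/(μ(α_k)^(p-1) f_k(x)^(p-1)))`. -/
noncomputable def fSeq (p : ℕ) (α : ℝ) : ℕ → ℝ → ℝ
  | 0, _ => 1
  | k + 1, x =>
      (1 / (p : ℝ)) *
        (((p : ℝ) - 1) * mu p (alphaSeq p α k) * fSeq p α k x +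
          x / (mu p (alphaSeq p α k) ^ (p - 1) * fSeq p α k x ^ (p - 1)))


lemma bernL1 (q : ℕ) {u v : ℝ} (hu : 0 ≤ u) (huv : u ≤ v) :
    ((q : ℝ) + 1) * u * v ^ q ≤ u ^ (q + 1) + (q : ℝ) * v ^ (q + 1) := by
  induction q with
  | zero => simp
  | succ q ih =>
    have hv : 0 ≤ v := hu.trans huv
    have h2 : u ^ q * u ≤ v ^ q * v :=
      mul_le_mul (pow_le_pow_left₀ hu huv q) huv hu (pow_nonneg hv q)
    have h3 : 0 ≤ (v - u) * (v ^ q * v - u ^ q * u) := by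
      apply mul_nonneg <;> linarith
    have h4 := mul_le_mul_of_nonneg_left ih hv
    push_cast
    simp only [pow_succ] at *
    nlinarith [h3, h4]

lemma key_mono (q : ℕ) {m F G x y : ℝ} (hm : 0 < m) (hF : 0 < F) (hFG : F ≤ G)
    (hx : 0 ≤ x) (hxy : x ≤ y) (hinv : x ≤ (m * F) ^ (q + 1)) :
    (q : ℝ) * m * F + x / (m ^ q * F ^ q) ≤ (q : ℝ) * m * G + y / (m ^ q * G ^ q) := by
  have hG : 0 < G := hF.trans_le hFG
  have hmq : (0:ℝ) < m ^ q := pow_pos hm q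
  have hFq : (0:ℝ) < F ^ q := pow_pos hF q
  have hGq : (0:ℝ) < G ^ q := pow_pos hG q
  have hpow : F ^ q ≤ G ^ q := pow_le_pow_left₀ hF.le hFG q
  have hb := bernL1 q hF.le hFG
  have fact1 : F * (G ^ q - F ^ q) ≤ (q:ℝ) * (G ^ q * (G - F)) := by
    simp only [pow_succ] at hb; nlinarith [hb]
  have hinv' : x ≤ m ^ q * m * (F ^ q * F) := by
    have h : (m * F) ^ (q + 1) = m ^ q * m * (F ^ q * F) := by
      rw [mul_pow]; ring
    linarith [hinv.trans_eq h]
  have fact2 : x * (G ^ q - F ^ q) ≤ (m ^ q * m * (F ^ q * F)) * (G ^ q - F ^ q) :=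
    mul_le_mul_of_nonneg_right hinv' (by linarith)
  have fact3 : (m ^ q * m * F ^ q) * (F * (G ^ q - F ^ q))
      ≤ (m ^ q * m * F ^ q) * ((q:ℝ) * (G ^ q * (G - F))) :=
    mul_le_mul_of_nonneg_left fact1 (by positivity)
  have step1 : x / (m ^ q * F ^ q) - x / (m ^ q * G ^ q) ≤ (q:ℝ) * m * (G - F) := by
    rw [div_sub_div _ _ (by positivity) (by positivity), div_le_iff₀ (by positivity)]
    nlinarith [fact2, fact3]
  have step2 : x / (m ^ q * G ^ q) ≤ y / (m ^ q * G ^ q) := by gcongr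
  linarith

lemma key_inv (q : ℕ) {m a s F : ℝ} (hm : 0 < m) (ha : 0 < a) (ham : a ≤ m)
    (hs : 0 ≤ s) (hF : 0 < F) (hsu : s ≤ a * F) :
    s * ((q : ℝ) * m + a ^ (q + 1) / m ^ q)
      ≤ a * ((q : ℝ) * m * F + s ^ (q + 1) / (m ^ q * F ^ q)) := by
  have hmq : (0:ℝ) < m ^ q := pow_pos hm q
  have hFq : (0:ℝ) < F ^ q := pow_pos hF q
  have hu0 : 0 < a * F := mul_pos ha hF
  have hb := bernL1 q hs hsu
  have fact1 : s * ((a*F) ^ q - s ^ q) ≤ (q:ℝ) * ((a*F) ^ q * ((a*F) - s)) := by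
    simp only [pow_succ] at hb; nlinarith [hb]
  simp only [mul_pow] at fact1
  have fact2 := mul_le_mul_of_nonneg_left fact1 ha.le
  have hapow : a ^ q * a ≤ m ^ q * m := by
    rw [← pow_succ, ← pow_succ]; exact pow_le_pow_left₀ ha.le ham (q+1)
  have fact3 : (q:ℝ) * ((a ^ q * a) * (F ^ q * (a*F - s)))
      ≤ (q:ℝ) * ((m ^ q * m) * (F ^ q * (a*F - s))) := by
    apply mul_le_mul_of_nonneg_left _ (by positivity)
    apply mul_le_mul_of_nonneg_right hapow
    apply mul_nonneg hFq.le (by linarith)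
  rw [← mul_le_mul_iff_of_pos_right (show (0:ℝ) < m ^ q * F ^ q from by positivity)]
  have e1 : s * ((q:ℝ) * m + a ^ (q + 1) / m ^ q) * (m ^ q * F ^ q)
      = s * (q:ℝ) * m * (m ^ q * F ^ q) + s * (a ^ q * a) * F ^ q := by
    rw [pow_succ]; field_simp
  have e2 : a * ((q : ℝ) * m * F + s ^ (q + 1) / (m ^ q * F ^ q)) * (m ^ q * F ^ q)
      = a * (q:ℝ) * m * F * (m ^ q * F ^ q) + a * (s ^ q * s) := by
    rw [pow_succ]; field_simp
  rw [e1, e2]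
  nlinarith [fact2, fact3]

lemma bernL2 {q : ℕ} (hq : 1 ≤ q) {u v : ℝ} (hu : 0 ≤ u) (huv : u < v) :
    ((q : ℝ) + 1) * u * v ^ q < u ^ (q + 1) + (q : ℝ) * v ^ (q + 1) := by
  obtain ⟨r, rfl⟩ : ∃ r, q = r + 1 := ⟨q - 1, (Nat.succ_pred_eq_of_pos hq).symm⟩
  have hv : 0 < v := hu.trans_lt huv
  have h1 := bernL1 r hu huv.le
  have h2 : u ^ (r + 1) < v ^ (r + 1) := pow_lt_pow_left₀ huv hu (Nat.succ_ne_zero r)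
  have h3 : 0 < (v - u) * (v ^ (r + 1) - u ^ (r + 1)) := by
    apply mul_pos <;> linarith
  have h4 := mul_le_mul_of_nonneg_left h1 hv.le
  push_cast
  simp only [pow_succ] at *
  nlinarith [h3, h4]

section
variable {p : ℕ} (hp : 2 ≤ p) {t : ℝ} (ht : t ∈ Set.Ioo (0:ℝ) 1)
include hp ht

lemma mu_base_pos : 0 < (t - t ^ p) / (((p : ℝ) - 1) * (1 - t)) := by
  obtain ⟨ht0, ht1⟩ := ht
  have hnum : t ^ p < t := by
    calc t ^ p < t ^ 1 := pow_lt_pow_right_of_lt_one₀ ht0 ht1 (by omega)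
    _ = t := pow_one t
  have hden : 0 < ((p : ℝ) - 1) * (1 - t) := by
    have : (2:ℝ) ≤ p := by exact_mod_cast hp
    apply mul_pos <;> linarith
  exact div_pos (by linarith) hden

lemma mu_pos_s17 : 0 < mu p t :=
  Real.rpow_pos_of_pos (mu_base_pos hp ht) _

lemma mu_pow : (mu p t) ^ p = (t - t ^ p) / (((p : ℝ) - 1) * (1 - t)) := by
  have hB := mu_base_pos hp ht
  have hp0 : (p : ℝ) ≠ 0 := by positivity
  rw [mu, ← Real.rpow_natCast (_ ^ _) p, ← Real.rpow_mul hB.le, one_div,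
    inv_mul_cancel₀ hp0, Real.rpow_one]

lemma lt_mu : t < mu p t := by
  have hmu := mu_pos_s17 hp ht
  have hmupow := mu_pow hp ht
  obtain ⟨ht0, ht1⟩ := ht
  refine lt_of_pow_lt_pow_left₀ p hmu.le ?_
  rw [hmupow]
  have hden : 0 < ((p : ℝ) - 1) * (1 - t) := by
    have : (2:ℝ) ≤ p := by exact_mod_cast hp
    apply mul_pos <;> linarith
  rw [lt_div_iff₀ hden]
  obtain ⟨q, rfl⟩ : ∃ q, p = q + 1 := ⟨p - 1, (Nat.succ_pred_eq_of_pos (by omega)).symm⟩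
  set e : ℝ := 1 - t with he
  have he0 : 0 < e := by linarith
  have h1e : (0:ℝ) < 1 + e := by linarith
  have hA : t * (1 + e) < 1 := by nlinarith
  have hB2 : t ^ q < (1 / (1 + e)) ^ q := by
    apply pow_lt_pow_left₀ _ ht0.le (by omega : q ≠ 0)
    rw [lt_div_iff₀ h1e]; exact hA
  have hC : 1 + (q : ℝ) * e ≤ (1 + e) ^ q := one_add_mul_le_pow (by linarith) q
  have hpos : (0:ℝ) < 1 + (q : ℝ) * e := by positivity
  have h1eq : (0:ℝ) < (1 + e) ^ q := pow_pos h1e q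
  have key : t ^ q * (1 + (q : ℝ) * e) < 1 := by
    calc t ^ q * (1 + (q : ℝ) * e) < (1 / (1 + e)) ^ q * (1 + (q : ℝ) * e) :=
          mul_lt_mul_of_pos_right hB2 hpos
    _ = (1 + (q : ℝ) * e) / (1 + e) ^ q := by rw [div_pow, one_pow]; ring
    _ ≤ 1 := by rw [div_le_one h1eq]; exact hC
  have expand : t ^ (q + 1) = t ^ q * t := pow_succ t q
  push_cast
  nlinarith [pow_nonneg ht0.le q, key]
end


lemma main_aux (q : ℕ) (hq : 1 ≤ q) (α : ℝ) (hα : α ∈ Set.Ioo (0:ℝ) 1) (k : ℕ) :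
    alphaSeq (q+1) α k ∈ Set.Ioo (0:ℝ) 1 ∧
    (∀ x ∈ Set.Icc (0:ℝ) (α ^ (q+1)), 0 < fSeq (q+1) α k x ∧
      x ≤ (alphaSeq (q+1) α k * fSeq (q+1) α k x) ^ (q+1)) ∧
    MonotoneOn (fSeq (q+1) α k) (Set.Icc (0:ℝ) (α ^ (q+1))) := by
  have hp : 2 ≤ q + 1 := by omega
  induction k with
  | zero =>
    refine ⟨hα, fun x hx => ⟨one_pos, ?_⟩, monotoneOn_const⟩
    · simpa [alphaSeq, fSeq] using hx.2
  | succ k ih =>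
    obtain ⟨ha, hpi, hmono⟩ := ih
    set a := alphaSeq (q+1) α k with haeq
    set m := mu (q+1) a with hmeq
    have hm0 : 0 < m := mu_pos_s17 hp ha
    have ham : a < m := lt_mu hp ha
    have hmq : (0:ℝ) < m ^ q := pow_pos hm0 q
    have hcast : ((q+1 : ℕ) : ℝ) - 1 = (q : ℝ) := by push_cast; ring
    have hsub : q + 1 - 1 = q := rfl
    have haseq : alphaSeq (q+1) α (k+1)
        = ((q:ℝ)+1) * a / ((q:ℝ) * m + a ^ (q+1) / m ^ q) := by
      simp only [alphaSeq, Nat.add_sub_cancel, ← haeq, ← hmeq]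
      push_cast
      ring_nf
    have hfseq : ∀ x : ℝ, fSeq (q+1) α (k+1) x
        = (1/((q:ℝ)+1)) * ((q:ℝ) * m * fSeq (q+1) α k x
            + x / (m ^ q * fSeq (q+1) α k x ^ q)) := by
      intro x
      simp only [fSeq, Nat.add_sub_cancel, ← haeq, ← hmeq]
      push_cast
      ring_nf
    have hq0 : (0:ℝ) < (q:ℝ) := by exact_mod_cast hq
    -- strict lower bound on the denominator
    have hb2 := bernL2 hq ha.1.le ham
    have h2 : ((q:ℝ)+1) * a * m ^ q < (q:ℝ) * m * m ^ q + a ^ (q+1) := by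
      simp only [pow_succ] at hb2 ⊢; linarith
    have hD : ((q:ℝ)+1) * a < (q:ℝ) * m + a ^ (q+1) / m ^ q := by
      have h4 : ((q:ℝ)+1) * a = (((q:ℝ)+1) * a * m ^ q) / m ^ q := by field_simp
      have h5 : (q:ℝ) * m + a ^ (q+1) / m ^ q = ((q:ℝ) * m * m ^ q + a ^ (q+1)) / m ^ q := by
        field_simp
      rw [h4, h5]
      gcongr
    have haa : 0 < ((q:ℝ)+1) * a := mul_pos (by positivity) ha.1
    have hDpos : 0 < (q:ℝ) * m + a ^ (q+1) / m ^ q := haa.trans hD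
    have hA1 : alphaSeq (q+1) α (k+1) ∈ Set.Ioo (0:ℝ) 1 := by
      rw [haseq]
      exact ⟨div_pos haa hDpos, (div_lt_one hDpos).2 hD⟩
    -- positivity of the next f
    have hfpos : ∀ x ∈ Set.Icc (0:ℝ) (α ^ (q+1)), 0 < fSeq (q+1) α (k+1) x := by
      intro x hx
      obtain ⟨hFpos, hinv⟩ := hpi x hx
      rw [hfseq x]
      have h1 : 0 < (q:ℝ) * m * fSeq (q+1) α k x := mul_pos (mul_pos hq0 hm0) hFpos
      have h2 : 0 ≤ x / (m ^ q * fSeq (q+1) α k x ^ q) := by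
        apply div_nonneg hx.1; positivity
      have h3 : (0:ℝ) < 1/((q:ℝ)+1) := by positivity
      nlinarith
    -- invariant for the next step
    have hinv1 : ∀ x ∈ Set.Icc (0:ℝ) (α ^ (q+1)),
        x ≤ (alphaSeq (q+1) α (k+1) * fSeq (q+1) α (k+1) x) ^ (q+1) := by
      intro x hx
      obtain ⟨hFpos, hinv⟩ := hpi x hx
      rcases eq_or_lt_of_le hx.1 with h0 | hx0
      · rw [← h0]
        have h0mem : (0:ℝ) ∈ Set.Icc (0:ℝ) (α ^ (q+1)) := ⟨le_refl _, pow_nonneg hα.1.le (q+1)⟩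
        exact (pow_pos (mul_pos hA1.1 (hfpos 0 h0mem)) (q+1)).le
      · set s : ℝ := x ^ ((1:ℝ)/((q:ℕ)+1)) with hseq
        have hs0 : 0 < s := Real.rpow_pos_of_pos hx0 _
        have hsp : s ^ (q+1) = x := by
          rw [hseq, ← Real.rpow_natCast (x ^ ((1:ℝ)/((q:ℕ)+1))) (q+1),
            ← Real.rpow_mul hx.1]
          push_cast
          rw [one_div, inv_mul_cancel₀ (by positivity), Real.rpow_one]
        have hsu : s ≤ a * fSeq (q+1) α k x := by
          apply le_of_pow_le_pow_left₀ (Nat.succ_ne_zero q)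
            (mul_nonneg ha.1.le hFpos.le)
          rw [hsp]; exact hinv
        have key := key_inv q hm0 ha.1 ham.le hs0.le hFpos hsu
        rw [hsp] at key
        have hmain : s ≤ alphaSeq (q+1) α (k+1) * fSeq (q+1) α (k+1) x := by
          rw [haseq, hfseq x]
          set D : ℝ := (q:ℝ) * m + a ^ (q+1) / m ^ q with hDdef
          set E : ℝ := (q:ℝ) * m * fSeq (q+1) α k x
            + x / (m ^ q * fSeq (q+1) α k x ^ q) with hEdef
          have hE : ((q:ℝ)+1) * a / D * ((1/((q:ℝ)+1)) * E) = a * E / D := by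
            field_simp
          rw [hE, le_div_iff₀ hDpos]
          linarith [key]
        calc x = s ^ (q+1) := hsp.symm
        _ ≤ _ := pow_le_pow_left₀ hs0.le hmain (q+1)
    refine ⟨hA1, fun x hx => ⟨hfpos x hx, hinv1 x hx⟩, ?_⟩
    -- monotonicity
    intro x hx y hy hxy
    rw [hfseq x, hfseq y]
    have hFx := (hpi x hx).1
    have hFy := (hpi y hy).1
    have hFG : fSeq (q+1) α k x ≤ fSeq (q+1) α k y := hmono hx hy hxy
    have hinvx : x ≤ (m * fSeq (q+1) α k x) ^ (q+1) := by
      calc x ≤ (a * fSeq (q+1) α k x) ^ (q+1) := (hpi x hx).2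
      _ ≤ (m * fSeq (q+1) α k x) ^ (q+1) := by
          apply pow_le_pow_left₀ (mul_nonneg ha.1.le hFx.le)
          exact mul_le_mul_of_nonneg_right ham.le hFx.le
    have hkm := key_mono q hm0 hFx hFG hx.1 hxy hinvx
    have h3 : (0:ℝ) ≤ 1/((q:ℝ)+1) := by positivity
    exact mul_le_mul_of_nonneg_left hkm h3

/-- **Lemma 3 (details).** For every `α ∈ (0,1)` and every `k ≥ 0`: `f_k` is nondecreasing
on `[0, α^p]`, `f_k(0) > 0`, and `f_{k+1}(0) = ((p-1)/p) μ(α_k) f_k(0)`. -/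
theorem fSeq_monotone_and_positive_at_zero (p : ℕ) (hp : 2 ≤ p)
    (α : ℝ) (hα : α ∈ Set.Ioo (0 : ℝ) 1) (k : ℕ) :
    MonotoneOn (fSeq p α k) (Set.Icc (0 : ℝ) (α ^ p)) ∧
    0 < fSeq p α k 0 ∧
    fSeq p α (k + 1) 0 = (((p : ℝ) - 1) / (p : ℝ)) * mu p (alphaSeq p α k) * fSeq p α k 0 := by
  obtain ⟨q, rfl⟩ : ∃ q, p = q + 1 := ⟨p - 1, (Nat.succ_pred_eq_of_pos (by omega)).symm⟩
  have hq : 1 ≤ q := by omega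
  obtain ⟨ha, hpi, hmono⟩ := main_aux q hq α hα k
  have h0mem : (0:ℝ) ∈ Set.Icc (0:ℝ) (α ^ (q+1)) := ⟨le_refl _, pow_nonneg hα.1.le _⟩
  refine ⟨hmono, (hpi 0 h0mem).1, ?_⟩
  simp only [fSeq, zero_div, add_zero]
  ring
end

section
/- For every α ∈ (0,1) and every integer k ≥ 1, f_k is a rational function of type (p^(k−1), p^(k−1)−1): there exist real polynomials P_k and Q_k with deg P_k ≤ p^(k−1), deg Q_k ≤ p^(k−1) − 1, Q_k(x) > 0 for all x ∈ [0,1], and f_k(x) = P_k(x)/Q_k(x) for all x ∈ [0,1]. -/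
/-! ### Auxiliary lemmas -/

lemma aux_pow_sub_pow_upper (n : ℕ) {a m : ℝ} (ha : 0 ≤ a) (h : a ≤ m) :
    m ^ (n+1) - a ^ (n+1) ≤ (n+1 : ℝ) * m ^ n * (m - a) := by
  induction n with
  | zero => simp
  | succ n ih =>
    have hm : 0 ≤ m := ha.trans h
    have h2 : a ^ (n+1) ≤ m ^ (n+1) := pow_le_pow_left₀ ha h _
    calc m ^ (n+1+1) - a ^ (n+1+1)
        = m * (m ^ (n+1) - a ^ (n+1)) + a ^ (n+1) * (m - a) := by ring
      _ ≤ m * ((n+1 : ℝ) * m ^ n * (m - a)) + m ^ (n+1) * (m - a) :=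
          add_le_add (mul_le_mul_of_nonneg_left ih hm)
            (mul_le_mul_of_nonneg_right h2 (sub_nonneg.2 h))
      _ = (↑(n+1)+1 : ℝ) * m ^ (n+1) * (m - a) := by push_cast; ring

lemma aux_pow_sub_pow_lower (n : ℕ) {a m : ℝ} (hm : 0 ≤ m) (h : m ≤ a) :
    (n+1 : ℝ) * m ^ n * (a - m) ≤ a ^ (n+1) - m ^ (n+1) := by
  induction n with
  | zero => simp
  | succ n ih =>
    have ha : 0 ≤ a := hm.trans h
    have hX : 0 ≤ (n+1 : ℝ) * m ^ n * (a - m) := by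
      have := pow_nonneg hm n
      have := sub_nonneg.2 h
      positivity
    have step1 : (n+1 : ℝ) * m ^ (n+1) * (a - m) ≤ a * (a ^ (n+1) - m ^ (n+1)) := by
      have t1 : m * ((n+1 : ℝ) * m ^ n * (a - m)) ≤ a * ((n+1 : ℝ) * m ^ n * (a - m)) :=
        mul_le_mul_of_nonneg_right h hX
      have t2 : a * ((n+1 : ℝ) * m ^ n * (a - m)) ≤ a * (a ^ (n+1) - m ^ (n+1)) :=
        mul_le_mul_of_nonneg_left ih ha
      calc (n+1 : ℝ) * m ^ (n+1) * (a - m)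
          = m * ((n+1 : ℝ) * m ^ n * (a - m)) := by ring
        _ ≤ a * ((n+1 : ℝ) * m ^ n * (a - m)) := t1
        _ ≤ a * (a ^ (n+1) - m ^ (n+1)) := t2
    have h2 : m ^ (n+1) ≤ a ^ (n+1) := pow_le_pow_left₀ hm h _
    calc (↑(n+1)+1 : ℝ) * m ^ (n+1) * (a - m)
        = (n+1 : ℝ) * m ^ (n+1) * (a - m) + m ^ (n+1) * (a - m) := by push_cast; ring
      _ ≤ a * (a ^ (n+1) - m ^ (n+1)) + m ^ (n+1) * (a - m) := by linarith
      _ = a ^ (n+1+1) - m ^ (n+1+1) := by ring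

/-- Strict AM–GM type inequality: for positive `a ≠ m`,
`p a m^{p-1} < (p-1) m^p + a^p` where `p = q+2`. -/
lemma aux_amgm_strict (q : ℕ) {a m : ℝ} (ha : 0 < a) (hm : 0 < m) (hne : a ≠ m) :
    (q+2 : ℝ) * a * m ^ (q+1) < (q+1 : ℝ) * m ^ (q+2) + a ^ (q+2) := by
  rcases lt_or_gt_of_ne hne with hlt | hgt
  · have h1 := aux_pow_sub_pow_upper q ha.le hlt.le
    have h2 : a * (m ^ (q+1) - a ^ (q+1)) ≤ a * ((q+1 : ℝ) * m ^ q * (m - a)) :=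
      mul_le_mul_of_nonneg_left h1 ha.le
    have h3 : 0 < (q+1 : ℝ) * m ^ q * ((m - a) * (m - a)) := by
      have := pow_pos hm q
      have := sub_pos.2 hlt
      positivity
    have key : (q+1 : ℝ) * m ^ q * ((m - a) * (m - a))
        = ((q+1 : ℝ) * m ^ (q+2) + a ^ (q+2) - (q+2 : ℝ) * a * m ^ (q+1))
          - (a * ((q+1 : ℝ) * m ^ q * (m - a)) - a * (m ^ (q+1) - a ^ (q+1))) := by ring
    nlinarith [h2, h3, key]
  · have h1 := aux_pow_sub_pow_lower q hm.le hgt.le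
    have h2 : a * ((q+1 : ℝ) * m ^ q * (a - m)) ≤ a * (a ^ (q+1) - m ^ (q+1)) :=
      mul_le_mul_of_nonneg_left h1 ha.le
    have h3 : 0 < (q+1 : ℝ) * m ^ q * ((a - m) * (a - m)) := by
      have := pow_pos hm q
      have := sub_pos.2 hgt
      positivity
    have key : (q+1 : ℝ) * m ^ q * ((a - m) * (a - m))
        = ((q+1 : ℝ) * m ^ (q+2) + a ^ (q+2) - (q+2 : ℝ) * a * m ^ (q+1))
          - (a * (a ^ (q+1) - m ^ (q+1)) - a * ((q+1 : ℝ) * m ^ q * (a - m))) := by ring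
    nlinarith [h2, h3, key]

/-- For `t ∈ (0,1)` and `p ≥ 2`, `t < mu p t`. -/
lemma aux_lt_mu {p : ℕ} (hp : 2 ≤ p) {t : ℝ} (ht : t ∈ Set.Ioo (0:ℝ) 1) : t < mu p t := by
  obtain ⟨q, rfl⟩ : ∃ q, p = q + 2 := ⟨p - 2, by omega⟩
  obtain ⟨ht0, ht1⟩ := ht
  set p : ℕ := q + 2 with hpdef
  have hd : 0 < ((p : ℝ) - 1) * (1 - t) := by
    have : (1:ℝ) ≤ (p:ℝ) - 1 := by
      push_cast [hpdef]; linarith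
    nlinarith
  have key := aux_amgm_strict q (a := 1) (m := t) one_pos ht0 (by linarith : (1:ℝ) ≠ t)
  have key2 : (q+2 : ℝ) * t ^ (q+2) < ((q+1 : ℝ) * t ^ (q+2) + 1) * t := by
    have := mul_lt_mul_of_pos_left key ht0
    calc (q+2 : ℝ) * t ^ (q+2) = t * ((q+2 : ℝ) * 1 * t ^ (q+1)) := by ring
      _ < t * ((q+1 : ℝ) * t ^ (q+2) + 1 ^ (q+2)) := this
      _ = ((q+1 : ℝ) * t ^ (q+2) + 1) * t := by ring
  have hbase : t ^ p < (t - t ^ p) / (((p : ℝ) - 1) * (1 - t)) := by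
    rw [lt_div_iff₀ hd]
    push_cast [hpdef]
    nlinarith [key2]
  have htp : (0:ℝ) < t ^ p := pow_pos ht0 p
  have hlt : (t ^ p) ^ ((1:ℝ)/p) < mu p t := by
    unfold mu
    exact Real.rpow_lt_rpow htp.le hbase (by positivity)
  have heq : (t ^ p) ^ ((1:ℝ)/p) = t := by
    rw [← Real.rpow_natCast t p, ← Real.rpow_mul ht0.le]
    rw [mul_one_div, div_self (by positivity : (p:ℝ) ≠ 0), Real.rpow_one]
  rwa [heq] at hlt

lemma aux_mu_pos {p : ℕ} (hp : 2 ≤ p) {t : ℝ} (ht : t ∈ Set.Ioo (0:ℝ) 1) : 0 < mu p t :=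
  ht.1.trans (aux_lt_mu hp ht)

/-- The sequence `α_k` stays in `(0,1)`. -/
lemma aux_alpha_mem {p : ℕ} (hp : 2 ≤ p) {α : ℝ} (hα : α ∈ Set.Ioo (0:ℝ) 1) (k : ℕ) :
    alphaSeq p α k ∈ Set.Ioo (0:ℝ) 1 := by
  induction k with
  | zero => exact hα
  | succ k ih =>
    obtain ⟨q, hq⟩ : ∃ q, p = q + 2 := ⟨p - 2, by omega⟩
    set a := alphaSeq p α k with ha
    set m := mu p a with hm
    have hmu : a < m := aux_lt_mu hp ih
    have hm0 : 0 < m := ih.1.trans hmu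
    have key := aux_amgm_strict q ih.1 hm0 (ne_of_lt hmu)
    rw [← hq] at key
    have hp1 : p - 1 = q + 1 := by omega
    have hD : (p:ℝ) * a < ((p : ℝ) - 1) * m + a ^ p / m ^ (p - 1) := by
      rw [hp1, hq]
      push_cast
      rw [← sub_lt_iff_lt_add', lt_div_iff₀ (pow_pos hm0 (q+1))]
      calc (((q:ℝ)+2) * a - ((q:ℝ)+2-1) * m) * m ^ (q+1)
          = ((q:ℝ)+2) * a * m ^ (q+1) - ((q:ℝ)+1) * m ^ (q+2) := by ring
        _ < a ^ (q+2) := by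
            have := aux_amgm_strict q ih.1 hm0 (ne_of_lt hmu)
            linarith
    have hpa : 0 < (p:ℝ) * a := by
      have : (0:ℝ) < p := by positivity
      exact mul_pos this ih.1
    have hDpos : 0 < ((p : ℝ) - 1) * m + a ^ p / m ^ (p - 1) := hpa.trans hD
    constructor
    · show 0 < alphaSeq p α (k+1)
      rw [alphaSeq]
      exact div_pos hpa hDpos
    · show alphaSeq p α (k+1) < 1
      rw [alphaSeq]
      rw [div_lt_one hDpos]
      exact hD

open Polynomial in
/-- Main induction: `f_{k+1}` is a ratio of polynomials of degrees `≤ p^k` and `≤ p^k - 1`,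
both positive on `[0,1]`. -/
lemma aux_fSeq_rat {p : ℕ} (hp : 2 ≤ p) {α : ℝ} (hα : α ∈ Set.Ioo (0:ℝ) 1) (k : ℕ) :
    ∃ P Q : Polynomial ℝ, P.natDegree ≤ p ^ k ∧ Q.natDegree ≤ p ^ k - 1 ∧
      (∀ x ∈ Set.Icc (0:ℝ) 1, 0 < P.eval x) ∧ (∀ x ∈ Set.Icc (0:ℝ) 1, 0 < Q.eval x) ∧
      (∀ x ∈ Set.Icc (0:ℝ) 1, fSeq p α (k+1) x = P.eval x / Q.eval x) := by
  obtain ⟨q, rfl⟩ : ∃ q, p = q + 2 := ⟨p - 2, by omega⟩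
  have hppos : (0:ℝ) < ((q+2:ℕ):ℝ) := by positivity
  have hpR : ((q+2:ℕ):ℝ) = (q:ℝ) + 2 := by push_cast; ring
  have hp1 : q + 2 - 1 = q + 1 := by omega
  induction k with
  | zero =>
    have hm0 : 0 < mu (q+2) (alphaSeq (q+2) α 0) := aux_mu_pos hp (aux_alpha_mem hp hα 0)
    set m := mu (q+2) (alphaSeq (q+2) α 0) with hm
    refine ⟨C ((((q+2:ℕ):ℝ)-1) * m / ((q+2:ℕ):ℝ)) +
      C (1 / (((q+2:ℕ):ℝ) * m ^ (q+1))) * X, 1, ?_, ?_, ?_, ?_, ?_⟩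
    · refine le_trans (natDegree_add_le _ _) ?_
      have h1 : (C ((((q+2:ℕ):ℝ)-1) * m / ((q+2:ℕ):ℝ))).natDegree = 0 := natDegree_C _
      have h2 : (C (1 / (((q+2:ℕ):ℝ) * m ^ (q+1))) * X).natDegree ≤ 1 :=
        le_trans (natDegree_C_mul_le _ _) (by simp)
      simp only [pow_zero]
      omega
    · simp
    · intro x hx
      have hx0 : 0 ≤ x := hx.1
      have hc1 : 0 < (((q+2:ℕ):ℝ)-1) * m / ((q+2:ℕ):ℝ) := by
        have h2 : 0 < ((q+2:ℕ):ℝ) - 1 := by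
          rw [hpR]; have hq0 : (0:ℝ) ≤ (q:ℝ) := Nat.cast_nonneg q; linarith
        exact div_pos (mul_pos h2 hm0) hppos
      have hc2 : 0 ≤ 1 / (((q+2:ℕ):ℝ) * m ^ (q+1)) * x := by positivity
      simp only [eval_add, eval_mul, eval_C, eval_X]
      linarith
    · intro x hx; simp
    · intro x hx
      have hm0' : m ≠ 0 := ne_of_gt hm0
      have hp0 : ((q+2:ℕ):ℝ) ≠ 0 := ne_of_gt hppos
      rw [show (0:ℕ)+1 = 1 from rfl]
      rw [fSeq, fSeq]
      simp only [eval_add, eval_mul, eval_C, eval_X, eval_one, one_pow, mul_one, ← hm, hp1]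
      field_simp
  | succ k ih =>
    obtain ⟨P, Q, hPd, hQd, hPpos, hQpos, hf⟩ := ih
    have hm0 : 0 < mu (q+2) (alphaSeq (q+2) α (k+1)) :=
      aux_mu_pos hp (aux_alpha_mem hp hα (k+1))
    set m := mu (q+2) (alphaSeq (q+2) α (k+1)) with hm
    have hpk1 : 1 ≤ (q+2) ^ k := Nat.one_le_pow _ _ (by omega)
    obtain ⟨t, ht⟩ : ∃ t, (q+2) ^ k = t + 1 := ⟨(q+2) ^ k - 1, by omega⟩
    refine ⟨C ((((q+2:ℕ):ℝ)-1) * m / ((q+2:ℕ):ℝ)) * P ^ (q+2) +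
      C (1 / (((q+2:ℕ):ℝ) * m ^ (q+1))) * (X * Q ^ (q+2)),
      P ^ (q+1) * Q, ?_, ?_, ?_, ?_, ?_⟩
    · refine le_trans (natDegree_add_le _ _) (max_le ?_ ?_)
      · refine le_trans (natDegree_C_mul_le _ _) ?_
        rw [natDegree_pow, pow_succ]
        calc (q+2) * P.natDegree ≤ (q+2) * (q+2) ^ k := Nat.mul_le_mul_left _ hPd
          _ = (q+2) ^ k * (q+2) := Nat.mul_comm _ _
      · refine le_trans (natDegree_C_mul_le _ _) ?_
        refine le_trans (natDegree_mul_le) ?_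
        rw [natDegree_X, natDegree_pow, pow_succ]
        have h1 : Q.natDegree ≤ t := by omega
        have h2 : (q+2) * Q.natDegree ≤ (q+2) * t := Nat.mul_le_mul_left _ h1
        have h3 : (q+2) ^ k * (q+2) = (q+2) * t + (q+2) := by rw [ht]; ring
        omega
    · refine le_trans (natDegree_mul_le) ?_
      rw [natDegree_pow]
      have h1 : Q.natDegree ≤ t := by omega
      have h2 : (q+1) * P.natDegree ≤ (q+1) * (t+1) := by
        rw [← ht]; exact Nat.mul_le_mul_left _ hPd
      have h3 : (q+1) * (t+1) + (t+1) = (q+2) * (t+1) := by ring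
      have h4 : (q+2) ^ (k+1) = (q+2) * (t+1) := by rw [pow_succ, ht, Nat.mul_comm]
      omega
    · intro x hx
      have hx0 : 0 ≤ x := hx.1
      have hP0 : 0 < P.eval x := hPpos x hx
      have hQ0 : 0 < Q.eval x := hQpos x hx
      have hc1 : 0 < (((q+2:ℕ):ℝ)-1) * m / ((q+2:ℕ):ℝ) := by
        have h2 : 0 < ((q+2:ℕ):ℝ) - 1 := by
          rw [hpR]; have hq0 : (0:ℝ) ≤ (q:ℝ) := Nat.cast_nonneg q; linarith
        exact div_pos (mul_pos h2 hm0) hppos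
      simp only [eval_add, eval_mul, eval_C, eval_X, eval_pow]
      have term1 : 0 < (((q+2:ℕ):ℝ)-1) * m / ((q+2:ℕ):ℝ) * P.eval x ^ (q+2) := by positivity
      have term2 : 0 ≤ 1 / (((q+2:ℕ):ℝ) * m ^ (q+1)) * (x * Q.eval x ^ (q+2)) := by positivity
      linarith
    · intro x hx
      have hP0 : 0 < P.eval x := hPpos x hx
      have hQ0 : 0 < Q.eval x := hQpos x hx
      simp only [eval_mul, eval_pow]
      positivity
    · intro x hx
      have hP0 : P.eval x ≠ 0 := ne_of_gt (hPpos x hx)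
      have hQ0 : Q.eval x ≠ 0 := ne_of_gt (hQpos x hx)
      have hm0' : m ≠ 0 := ne_of_gt hm0
      have hp0 : ((q+2:ℕ):ℝ) ≠ 0 := ne_of_gt hppos
      rw [fSeq, hf x hx]
      simp only [eval_add, eval_mul, eval_C, eval_X, eval_pow, hp1, ← hm]
      rw [div_pow]
      field_simp
      ring


/-- **Type of `f_k`.** For every `α ∈ (0,1)` and `k ≥ 1`, `f_k` is a rational function of
type `(p^(k-1), p^(k-1)-1)`: there are real polynomials `P_k, Q_k` with
`deg P_k ≤ p^(k-1)`, `deg Q_k ≤ p^(k-1)-1`, `Q_k > 0` on `[0,1]` and `f_k = P_k/Q_k` on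
`[0,1]`. -/
theorem fSeq_is_rational_of_type (p : ℕ) (hp : 2 ≤ p)
    (α : ℝ) (hα : α ∈ Set.Ioo (0 : ℝ) 1) (k : ℕ) (hk : 1 ≤ k) :
    ∃ P Q : Polynomial ℝ,
      P.natDegree ≤ p ^ (k - 1) ∧ Q.natDegree ≤ p ^ (k - 1) - 1 ∧
      (∀ x ∈ Set.Icc (0 : ℝ) 1, 0 < Q.eval x) ∧
      (∀ x ∈ Set.Icc (0 : ℝ) 1, fSeq p α k x = P.eval x / Q.eval x) := by
  obtain ⟨n, rfl⟩ : ∃ n, k = n + 1 := ⟨k - 1, by omega⟩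
  obtain ⟨P, Q, h1, h2, _, h4, h5⟩ := aux_fSeq_rat hp hα n
  exact ⟨P, Q, by simpa using h1, by simpa using h2, h4, h5⟩
end
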